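/- Let d ≥ 1, let σ be a permutation of {1,…,d}, let O be a d×d real orthogonal matrix, set m = d(d−1)/2, and let ε_1,…,ε_m ∈ {1,−1} with ε_1 ⋯ ε_m = det(O). Then there exist real orthogonal matrices A_1,…,A_m with O = A_1 ⋯ A_m such that each A_i agrees with the d×d identity matrix in every entry outside the 2×2 principal submatrix with row and column indices σ(k_i) and σ(k_i + 1) for some k_i ∈ {1,…,d−1}, and det(A_i) = ε_i for every i. In particular, if det(O) = 1, then O is a product of at most d(d−1)/2 two-level special orthogonal P-matrices. -/

import Mathlib

/-- `A` agrees with the identity matrix in every entry outside the 2×2 principal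
submatrix with row and column indices `p` and `q` (a "two-level" pattern). -/
def IsTwoLevelOn {ι R : Type*} [DecidableEq ι] [Zero R] [One R]
    (A : Matrix ι ι R) (p q : ι) : Prop :=
  ∀ i j, (i ≠ p ∧ i ≠ q) ∨ (j ≠ p ∧ j ≠ q) → A i j = if i = j then 1 else 0

/-!
Givens reduction. For an orthogonal `O` of size `n + 2`, choose `n + 1` orthogonal two-level
matrices on the consecutive planes `(n, n + 1), …, (0, 1)`, in each plane a rotation or a reflection
according to the prescribed sign, that turn the first column of `O` into `e₀`. Their product with
`O` is orthogonal with first column, hence first row, `e₀`, so it is `1 ⊕ O'`, and induction on the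
size applies to `O'`: `(n + 2).choose 2 = (n + 1) + (n + 1).choose 2`, and the remaining signs
multiply to `det O'`. A general `σ` is reduced to `σ = 1` by conjugating with its permutation
matrix.

Putting a `2 × 2` block on a plane, a matrix on the last coordinates, and conjugating by a
permutation are all instances of `B ↦ 1 + P (B - 1) Pᵀ` for the `0/1` matrix `P` of an injection of
index sets; as `Pᵀ P = 1`, this map is multiplicative and preserves transposes and (by the
Weinstein–Aronszajn identity) determinants.
-/

theorem List.prod_mul_self_eq_one {M : Type*} [CommMonoid M] {l : List M}
    (h : ∀ x ∈ l, x * x = 1) : l.prod * l.prod = 1 := by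
  induction l with
  | nil => simp
  | cons a l ih =>
    rw [List.prod_cons, mul_mul_mul_comm, h a List.mem_cons_self,
      ih fun x hx => h x (List.mem_cons_of_mem a hx), one_mul]

theorem List.exists_ofFn_eq_of_map_eq_ofFn {α β : Type*} {m : ℕ} (l : List α) (f : α → β)
    (b : Fin m → β) (h : l.map f = List.ofFn b) :
    ∃ a : Fin m → α, List.ofFn a = l ∧ ∀ i, f (a i) = b i := by
  obtain rfl : l.length = m := by simpa using congrArg List.length h
  refine ⟨fun i => l[i], List.ofFn_getElem, fun i => ?_⟩
  simpa using List.getElem_of_eq h (i := i) (by simp)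

namespace Matrix

variable {κ ι R : Type*} [DecidableEq κ] [Fintype ι] [DecidableEq ι] [CommRing R]

theorem submatrix_one_mul_submatrix_one (f : κ ↪ ι) :
    (1 : Matrix ι ι R).submatrix f id * (1 : Matrix ι ι R).submatrix id f = 1 := by
  rw [← submatrix_mul _ _ _ _ _ Function.bijective_id, mul_one, submatrix_one_embedding]

variable [Fintype κ]

/-- `extendAlong f B` acts as `B` on the coordinates in the range of `f` and as the identity on
the others. -/
def extendAlong (f : κ ↪ ι) : Matrix κ κ R →* Matrix ι ι R where
  toFun B := 1 + (1 : Matrix ι ι R).submatrix id f * (B - 1) * (1 : Matrix ι ι R).submatrix f id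
  map_one' := by simp
  map_mul' B C := by
    set P := (1 : Matrix ι ι R).submatrix id f
    set Q := (1 : Matrix ι ι R).submatrix f id
    have hQP (X : Matrix κ ι R) : Q * (P * X) = X := by
      rw [← Matrix.mul_assoc, submatrix_one_mul_submatrix_one, Matrix.one_mul]
    rw [show B * C - 1 = (B - 1) + (C - 1) + (B - 1) * (C - 1) by noncomm_ring]
    simp only [Matrix.mul_add, Matrix.add_mul, Matrix.mul_one, Matrix.one_mul, Matrix.mul_assoc,
      hQP]
    abel

variable (f : κ ↪ ι) (B : Matrix κ κ R)

theorem extendAlong_eq : extendAlong f B =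
    1 + (1 : Matrix ι ι R).submatrix id f * (B - 1) * (1 : Matrix ι ι R).submatrix f id := rfl

theorem extendAlong_apply_apply (a b : κ) : extendAlong f B (f a) (f b) = B a b := by
  simp [extendAlong, mul_apply, one_apply, sub_apply]

theorem extendAlong_apply_of_notMem_range_left {i : ι} (hi : i ∉ Set.range f) (j : ι) :
    extendAlong f B i j = (1 : Matrix ι ι R) i j := by
  have : ∀ a, ¬ i = f a := fun a h => hi ⟨a, h.symm⟩
  simp [extendAlong, mul_apply, one_apply, this]

theorem transpose_extendAlong : (extendAlong f B)ᵀ = extendAlong f Bᵀ := by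
  simp [extendAlong, transpose_mul, transpose_sub, Matrix.mul_assoc]

theorem extendAlong_apply_of_notMem_range_right (i : ι) {j : ι} (hj : j ∉ Set.range f) :
    extendAlong f B i j = (1 : Matrix ι ι R) i j := by
  rw [← transpose_apply (extendAlong f B), transpose_extendAlong,
    extendAlong_apply_of_notMem_range_left f _ hj]
  simp [one_apply, eq_comm]

theorem det_extendAlong : (extendAlong f B).det = B.det := by
  rw [extendAlong_eq, Matrix.mul_assoc, det_one_add_mul_comm, Matrix.mul_assoc,
    submatrix_one_mul_submatrix_one, Matrix.mul_one, add_sub_cancel]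

theorem extendAlong_injective :
    Function.Injective (extendAlong f : Matrix κ κ R → Matrix ι ι R) := fun B C h => by
  ext a b
  rw [← extendAlong_apply_apply f B, h, extendAlong_apply_apply]

theorem transpose_extendAlong_mul_self_eq_one_iff :
    (extendAlong f B)ᵀ * extendAlong f B = 1 ↔ Bᵀ * B = 1 := by
  rw [transpose_extendAlong, ← map_mul, ← map_one (extendAlong f), (extendAlong_injective f).eq_iff]

theorem extendAlong_toEmbedding (e : κ ≃ ι) :
    extendAlong e.toEmbedding B = B.submatrix e.symm e.symm := by
  ext i j
  obtain ⟨a, rfl⟩ := e.surjective i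
  obtain ⟨b, rfl⟩ := e.surjective j
  exact (extendAlong_apply_apply e.toEmbedding B a b).trans (by simp)

theorem extendAlong_mulVec_apply (v : ι → R) (a : κ) :
    (extendAlong f B *ᵥ v) (f a) = (B *ᵥ (v ∘ f)) a := by
  have hQ : (1 : Matrix ι ι R).submatrix f id *ᵥ v = v ∘ f := by
    ext; simp [mulVec, dotProduct, one_apply]
  have hP (w : κ → R) : ((1 : Matrix ι ι R).submatrix id f *ᵥ w) (f a) = w a := by
    simp [mulVec, dotProduct, one_apply]
  rw [extendAlong_eq, add_mulVec, one_mulVec, ← mulVec_mulVec, ← mulVec_mulVec, hQ, Pi.add_apply,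
    hP, sub_mulVec, one_mulVec, Pi.sub_apply, Function.comp_apply, add_sub_cancel]

theorem extendAlong_mulVec_apply_of_notMem_range (v : ι → R) {i : ι} (hi : i ∉ Set.range f) :
    (extendAlong f B *ᵥ v) i = v i := by
  simp only [mulVec, dotProduct, extendAlong_apply_of_notMem_range_left f B hi]
  simp [one_apply]

end Matrix

open Matrix

theorem transpose_list_prod_mul_self_eq_one {n : Type*} [Fintype n] [DecidableEq n]
    {R : Type*} [CommRing R] (L : List (Matrix n n R)) (hL : ∀ A ∈ L, Aᵀ * A = 1) :
    L.prodᵀ * L.prod = 1 := by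
  induction L with
  | nil => simp
  | cons A L ih =>
    rw [List.prod_cons, transpose_mul, Matrix.mul_assoc, ← Matrix.mul_assoc Aᵀ,
      hL A List.mem_cons_self, Matrix.one_mul, ih fun B hB => hL B (List.mem_cons_of_mem A hB)]

theorem IsTwoLevelOn.transpose {ι R : Type*} [DecidableEq ι] [Zero R] [One R]
    {A : Matrix ι ι R} {p q : ι} (h : IsTwoLevelOn A p q) : IsTwoLevelOn Aᵀ p q := by
  intro i j hij
  rw [transpose_apply, h j i hij.symm]
  exact if_congr eq_comm rfl rfl

theorem IsTwoLevelOn.extendAlong {κ ι R : Type*} [Fintype κ] [DecidableEq κ] [Fintype ι]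
    [DecidableEq ι] [CommRing R] {A : Matrix κ κ R} {p q : κ} (h : IsTwoLevelOn A p q)
    (f : κ ↪ ι) : IsTwoLevelOn (extendAlong f A) (f p) (f q) := by
  intro i j hij
  by_cases hi : i ∈ Set.range f
  · by_cases hj : j ∈ Set.range f
    · obtain ⟨a, rfl⟩ := hi
      obtain ⟨b, rfl⟩ := hj
      rw [extendAlong_apply_apply, h a b (by simpa only [f.injective.ne_iff] using hij)]
      simp only [f.injective.eq_iff]
    · rw [extendAlong_apply_of_notMem_range_right f A i hj, one_apply]
  · rw [extendAlong_apply_of_notMem_range_left f A hi, one_apply]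

theorem isTwoLevelOn_fin_two {R : Type*} [Zero R] [One R] (B : Matrix (Fin 2) (Fin 2) R) :
    IsTwoLevelOn B 0 1 := by
  intro i j hij
  fin_cases i <;> fin_cases j <;> simp at hij

def IsAdjacentTwoLevel {n : ℕ} {R : Type*} [Zero R] [One R] (A : Matrix (Fin n) (Fin n) R) :
    Prop :=
  ∃ (k : ℕ) (hk : k + 1 < n), IsTwoLevelOn A ⟨k, Nat.lt_of_succ_lt hk⟩ ⟨k + 1, hk⟩

theorem IsAdjacentTwoLevel.transpose {n : ℕ} {R : Type*} [Zero R] [One R]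
    {A : Matrix (Fin n) (Fin n) R} (h : IsAdjacentTwoLevel A) : IsAdjacentTwoLevel Aᵀ :=
  let ⟨k, hk, hA⟩ := h
  ⟨k, hk, hA.transpose⟩

theorem IsAdjacentTwoLevel.extendAlong_succEmb {n : ℕ} {R : Type*} [CommRing R]
    {A : Matrix (Fin n) (Fin n) R} (h : IsAdjacentTwoLevel A) :
    IsAdjacentTwoLevel (extendAlong (Fin.succEmb n) A) :=
  let ⟨k, hk, hA⟩ := h
  ⟨k + 1, by omega, hA.extendAlong _⟩

theorem isAdjacentTwoLevel_extendAlong_castLEEmb {n : ℕ} {R : Type*} [CommRing R]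
    (B : Matrix (Fin 2) (Fin 2) R) :
    IsAdjacentTwoLevel (extendAlong (Fin.castLEEmb (by omega : 2 ≤ n + 2)) B) :=
  ⟨0, by omega, (isTwoLevelOn_fin_two B).extendAlong _⟩

theorem exists_orthogonal_det_eq_mulVec_eq_single (x y δ : ℝ) (hδ : δ = 1 ∨ δ = -1) :
    ∃ B : Matrix (Fin 2) (Fin 2) ℝ, Bᵀ * B = 1 ∧ B.det = δ ∧
      ∃ r, 0 ≤ r ∧ B *ᵥ ![x, y] = Pi.single 0 r := by
  have hδ2 : δ ^ 2 = 1 := by rcases hδ with rfl | rfl <;> norm_num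
  -- polar coordinates of `(x, y)`
  set z : ℂ := ⟨x, y⟩
  set c := Real.cos z.arg
  set s := Real.sin z.arg
  have hx : ‖z‖ * c = x := Complex.norm_mul_cos_arg z
  have hy : ‖z‖ * s = y := Complex.norm_mul_sin_arg z
  have hcs : c ^ 2 + s ^ 2 = 1 := Real.cos_sq_add_sin_sq _
  refine ⟨!![c, s; -δ * s, δ * c], ?_, ?_, ‖z‖, norm_nonneg z, ?_⟩
  · ext i j
    fin_cases i <;> fin_cases j <;>
      simp only [mul_apply, transpose_apply, of_apply, cons_val', cons_val_zero, cons_val_one,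
        cons_val_fin_one, Fin.sum_univ_two, Fin.isValue, Fin.zero_eta, Fin.mk_one, one_apply_eq,
        one_apply_ne, ne_eq, zero_ne_one, one_ne_zero, not_false_eq_true, neg_mul, mul_neg, neg_neg]
    · linear_combination hcs + s ^ 2 * hδ2
    · linear_combination -(c * s) * hδ2
    · linear_combination -(c * s) * hδ2
    · linear_combination hcs + c ^ 2 * hδ2
  · rw [det_fin_two_of]
    linear_combination δ * hcs
  · ext i
    fin_cases i <;>
      simp only [← hx, ← hy, mulVec_cons, mulVec_empty, Nat.succ_eq_add_one, Nat.reduceAdd,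
        add_zero, Pi.add_apply, Pi.smul_apply, Function.comp_apply, smul_eq_mul, cons_val_zero,
        cons_val_one, cons_val_fin_one, head_cons, tail_cons, neg_mul, mul_neg, Fin.isValue,
        Fin.zero_eta, Fin.mk_one, Pi.single_eq_same, ne_eq, one_ne_zero, not_false_eq_true,
        Pi.single_eq_of_ne]
    · linear_combination ‖z‖ * hcs
    · ring

theorem exists_adjacent_mulVec_eq_single {n : ℕ} (w : Fin (n + 2) → ℝ)
    (hw : ∀ i : Fin n, w i.succ.succ = 0) (δ : ℝ) (hδ : δ = 1 ∨ δ = -1) :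
    ∃ A : Matrix (Fin (n + 2)) (Fin (n + 2)) ℝ, Aᵀ * A = 1 ∧ IsAdjacentTwoLevel A ∧
      A.det = δ ∧ ∃ r, 0 ≤ r ∧ A *ᵥ w = Pi.single 0 r := by
  obtain ⟨B, hB, hBdet, r, hr, hBw⟩ := exists_orthogonal_det_eq_mulVec_eq_single (w 0) (w 1) δ hδ
  set f := Fin.castLEEmb (by omega : 2 ≤ n + 2)
  refine ⟨extendAlong f B, (transpose_extendAlong_mul_self_eq_one_iff f B).2 hB,
    isAdjacentTwoLevel_extendAlong_castLEEmb B, (det_extendAlong f B).trans hBdet, r, hr, ?_⟩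
  have hwf : w ∘ f = ![w 0, w 1] := by
    ext a; fin_cases a <;> rfl
  have hf (a : Fin 2) :
      (extendAlong f B *ᵥ w) (f a) = (Pi.single 0 r : Fin (n + 2) → ℝ) (f a) := by
    rw [extendAlong_mulVec_apply, hwf, hBw]
    fin_cases a <;> simp [f, Fin.ext_iff]
  ext i
  refine Fin.cases (hf 0) (Fin.cases (hf 1) fun j => ?_) i
  have hj : j.succ.succ ∉ Set.range f := by simp [f, Fin.range_castLE]
  rw [extendAlong_mulVec_apply_of_notMem_range f B w hj, hw,
    Pi.single_eq_of_ne (Fin.succ_ne_zero _)]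

theorem exists_list_prod_mulVec_eq_single (n : ℕ) (v : Fin (n + 2) → ℝ) (δ : List ℝ)
    (hδ : ∀ x ∈ δ, x = 1 ∨ x = -1) (hlen : δ.length = n + 1) :
    ∃ G : List (Matrix (Fin (n + 2)) (Fin (n + 2)) ℝ), G.map det = δ ∧
      (∀ A ∈ G, Aᵀ * A = 1 ∧ IsAdjacentTwoLevel A) ∧ ∃ r, 0 ≤ r ∧ G.prod *ᵥ v = Pi.single 0 r := by
  induction n generalizing δ with
  | zero =>
    obtain ⟨δ₀, δ', rfl⟩ := List.exists_cons_of_length_eq_add_one hlen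
    obtain rfl : δ' = [] := List.eq_nil_of_length_eq_zero (by simpa using hlen)
    obtain ⟨A, hA, hAadj, hAdet, r, hr, hAv⟩ :=
      exists_adjacent_mulVec_eq_single v finZeroElim δ₀ (hδ δ₀ List.mem_cons_self)
    exact ⟨[A], by simp [hAdet], by simp [hA, hAadj], r, hr, by simpa using hAv⟩
  | succ n ih =>
    obtain ⟨δ₀, δ', rfl⟩ := List.exists_cons_of_length_eq_add_one hlen
    obtain ⟨G, hGdet, hG, s, -, hGv⟩ := ih (v ∘ Fin.succ) δ'
      (fun x hx => hδ x (List.mem_cons_of_mem _ hx)) (by simpa using hlen)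
    set E := extendAlong (R := ℝ) (Fin.succEmb (n + 2))
    have hw (i : Fin (n + 1)) : (E G.prod *ᵥ v) i.succ.succ = 0 := by
      rw [show i.succ.succ = Fin.succEmb _ i.succ from rfl, extendAlong_mulVec_apply,
        Fin.coe_succEmb, hGv, Pi.single_eq_of_ne (Fin.succ_ne_zero i)]
    obtain ⟨A, hA, hAadj, hAdet, r, hr, hAw⟩ :=
      exists_adjacent_mulVec_eq_single _ hw δ₀ (hδ δ₀ List.mem_cons_self)
    refine ⟨A :: G.map E, ?_, ?_, r, hr, ?_⟩
    · simp [E, hAdet, Function.comp_def, det_extendAlong, ← hGdet]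
    · simp only [List.mem_cons, List.mem_map]
      rintro _ (rfl | ⟨B, hB, rfl⟩)
      · exact ⟨hA, hAadj⟩
      · exact ⟨(transpose_extendAlong_mul_self_eq_one_iff _ B).2 (hG B hB).1,
          (hG B hB).2.extendAlong_succEmb⟩
    · rw [List.prod_cons, ← map_list_prod, ← mulVec_mulVec, hAw]

theorem eq_extendAlong_succEmb_submatrix {n : ℕ} {R : Type*} [CommRing R]
    {M : Matrix (Fin (n + 1)) (Fin (n + 1)) R} (hM : Mᵀ * M = 1)
    (hcol : M *ᵥ Pi.single 0 1 = Pi.single 0 1) :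
    M = extendAlong (Fin.succEmb n) (M.submatrix Fin.succ Fin.succ) := by
  have hrow : Mᵀ *ᵥ Pi.single 0 1 = Pi.single 0 1 :=
    calc Mᵀ *ᵥ Pi.single 0 1 = (Mᵀ * M) *ᵥ Pi.single 0 1 := by rw [← mulVec_mulVec, hcol]
      _ = Pi.single 0 1 := by rw [hM, one_mulVec]
  have h0 : (0 : Fin (n + 1)) ∉ Set.range (Fin.succEmb n) := by simp [Fin.range_succ]
  ext i j
  refine Fin.cases ?_ (fun i => Fin.cases ?_ (fun j => ?_) j) i
  · rw [extendAlong_apply_of_notMem_range_left _ _ h0]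
    simpa [one_apply, Pi.single_apply, eq_comm] using congrFun hrow j
  · rw [extendAlong_apply_of_notMem_range_right _ _ _ h0]
    simpa [one_apply, Pi.single_apply] using congrFun hcol i.succ
  · exact (extendAlong_apply_apply (Fin.succEmb n) (M.submatrix Fin.succ Fin.succ) i j).symm

theorem exists_list_prod_mul_eq_extendAlong_succEmb (n : ℕ)
    {O : Matrix (Fin (n + 2)) (Fin (n + 2)) ℝ} (hO : Oᵀ * O = 1) (δ : List ℝ)
    (hδ : ∀ x ∈ δ, x = 1 ∨ x = -1) (hlen : δ.length = n + 1) :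
    ∃ G : List (Matrix (Fin (n + 2)) (Fin (n + 2)) ℝ), G.map det = δ ∧
      (∀ A ∈ G, Aᵀ * A = 1 ∧ IsAdjacentTwoLevel A) ∧
      ∃ O' : Matrix (Fin (n + 1)) (Fin (n + 1)) ℝ, O'ᵀ * O' = 1 ∧ O'.det = δ.prod * O.det ∧
        G.prod * O = extendAlong (Fin.succEmb (n + 1)) O' := by
  obtain ⟨G, hGdet, hG, r, hr, hGv⟩ :=
    exists_list_prod_mulVec_eq_single n (O *ᵥ Pi.single 0 1) δ hδ hlen
  set M := G.prod * O
  have hM : Mᵀ * M = 1 := by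
    rw [transpose_mul, Matrix.mul_assoc, ← Matrix.mul_assoc G.prodᵀ,
      transpose_list_prod_mul_self_eq_one G fun A hA => (hG A hA).1, Matrix.one_mul, hO]
  have hMv : M *ᵥ Pi.single 0 1 = Pi.single 0 r := by rw [← mulVec_mulVec, hGv]
  -- the first column `r • e₀` of `M` is a unit vector
  have hr1 : r = 1 := by
    have h00 := congrFun (congrFun hM 0) 0
    have hcol (i : Fin (n + 2)) : M i 0 = (Pi.single 0 r : Fin (n + 2) → ℝ) i := by
      simpa using congrFun hMv i
    simp only [mul_apply, transpose_apply, hcol] at h00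
    simp only [Pi.single_apply, mul_ite, ite_mul, zero_mul, mul_zero, Finset.sum_ite_eq',
      Finset.mem_univ, if_true, one_apply_eq] at h00
    nlinarith
  rw [hr1] at hMv
  have hMO' := eq_extendAlong_succEmb_submatrix hM hMv
  refine ⟨G, hGdet, hG, M.submatrix Fin.succ Fin.succ,
    (transpose_extendAlong_mul_self_eq_one_iff _ _).1 (hMO' ▸ hM), ?_, hMO'⟩
  rw [← det_extendAlong (Fin.succEmb (n + 1)), ← hMO', det_mul, ← coe_detMonoidHom, map_list_prod,
    coe_detMonoidHom, hGdet]

theorem exists_list_prod_eq : ∀ (n : ℕ) (O : Matrix (Fin n) (Fin n) ℝ), Oᵀ * O = 1 →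
    ∀ ε : List ℝ, (∀ x ∈ ε, x = 1 ∨ x = -1) → ε.length = n.choose 2 → ε.prod = O.det →
    ∃ L : List (Matrix (Fin n) (Fin n) ℝ), L.map det = ε ∧
      (∀ A ∈ L, Aᵀ * A = 1 ∧ IsAdjacentTwoLevel A) ∧ L.prod = O
  | 0, O, _, ε, _, hlen, _ =>
    ⟨[], by simpa using (List.eq_nil_of_length_eq_zero hlen).symm, by simp,
      Subsingleton.elim _ _⟩
  | 1, O, _, ε, _, hlen, hprod => by
    obtain rfl : ε = [] := List.eq_nil_of_length_eq_zero hlen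
    refine ⟨[], rfl, by simp, ?_⟩
    ext i j
    fin_cases i; fin_cases j
    simpa [det_fin_one] using hprod
  | n + 2, O, hO, ε, hε, hlen, hprod => by
    have hlen' : ε.length = (n + 1) + (n + 1).choose 2 := by
      rw [hlen, Nat.choose_succ_succ', Nat.choose_one_right]
    obtain ⟨G, hGdet, hG, O', hO', hO'det, hGO⟩ := exists_list_prod_mul_eq_extendAlong_succEmb n hO
      (ε.take (n + 1)).reverse (fun x hx => hε x (List.mem_of_mem_take (List.mem_reverse.1 hx)))
      (by rw [List.length_reverse, List.length_take]; omega)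
    have hsq : (ε.take (n + 1)).prod * (ε.take (n + 1)).prod = 1 := by
      refine List.prod_mul_self_eq_one fun x hx => ?_
      rcases hε x (List.mem_of_mem_take hx) with rfl | rfl <;> norm_num
    have hdrop : (ε.drop (n + 1)).prod = O'.det := by
      rw [hO'det, List.prod_reverse, ← hprod, ← List.prod_take_mul_prod_drop ε (n + 1),
        ← mul_assoc, hsq, one_mul]
    obtain ⟨L, hLdet, hL, hLO'⟩ := exists_list_prod_eq (n + 1) O' hO' (ε.drop (n + 1))
      (fun x hx => hε x (List.mem_of_mem_drop hx)) (by rw [List.length_drop]; omega) hdrop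
    refine ⟨G.reverse.map transpose ++ L.map (extendAlong (Fin.succEmb (n + 1))), ?_, ?_, ?_⟩
    · rw [List.map_append, List.map_map, List.map_map, List.map_reverse]
      simp [Function.comp_def, det_extendAlong, hLdet, hGdet]
    · simp only [List.mem_append, List.mem_map, List.mem_reverse]
      rintro _ (⟨A, hA, rfl⟩ | ⟨A, hA, rfl⟩)
      · exact ⟨mul_eq_one_comm.1 (by simpa using (hG A hA).1), (hG A hA).2.transpose⟩
      · exact ⟨(transpose_extendAlong_mul_self_eq_one_iff _ A).2 (hL A hA).1,
          (hL A hA).2.extendAlong_succEmb⟩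
    · rw [List.prod_append, ← map_list_prod, hLO', ← hGO, List.map_reverse, ← transpose_list_prod,
        ← Matrix.mul_assoc, transpose_list_prod_mul_self_eq_one G fun A hA => (hG A hA).1,
        Matrix.one_mul]

/-- Every `d × d` real orthogonal matrix is a product of `m = d(d-1)/2` two-level
orthogonal `P`-matrices with any prescribed determinants `ε_i ∈ {1, -1}` whose
product equals `det O`. -/
theorem orthogonal_eq_prod_P_orthogonal_prescribed_det (d : ℕ)
    (σ : Equiv.Perm (Fin d))
    (O : Matrix (Fin d) (Fin d) ℝ) (hO : O.transpose * O = 1)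
    (ε : Fin (d * (d - 1) / 2) → ℝ) (hε : ∀ i, ε i = 1 ∨ ε i = -1)
    (hprod : ∏ i, ε i = O.det) :
    ∃ A : Fin (d * (d - 1) / 2) → Matrix (Fin d) (Fin d) ℝ,
      O = (List.ofFn A).prod ∧
      ∀ i, (A i).transpose * A i = 1 ∧
        (∃ (k : ℕ) (hk : k + 1 < d),
          IsTwoLevelOn (A i) (σ ⟨k, by omega⟩) (σ ⟨k + 1, hk⟩)) ∧
        (A i).det = ε i := by
  set E := extendAlong (R := ℝ) σ.toEmbedding
  have hEO : E (O.submatrix σ σ) = O := by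
    rw [extendAlong_toEmbedding, submatrix_submatrix]
    simp
  rw [← hEO, transpose_extendAlong_mul_self_eq_one_iff] at hO
  obtain ⟨L, hLdet, hL, hLO⟩ := exists_list_prod_eq d (O.submatrix σ σ) hO (List.ofFn ε)
    (by simpa using hε) (by simp [Nat.choose_two_right])
    (by rw [List.prod_ofFn, hprod, det_submatrix_equiv_self])
  obtain ⟨A, hAL, hAdet⟩ := List.exists_ofFn_eq_of_map_eq_ofFn (L.map E) det ε
    (by simp [E, Function.comp_def, det_extendAlong, hLdet])
  refine ⟨A, by rw [hAL, ← map_list_prod, hLO, hEO], fun i => ?_⟩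
  obtain ⟨B, hB, hBA⟩ := List.mem_map.1 (hAL ▸ (List.mem_ofFn' A (A i)).2 ⟨i, rfl⟩)
  obtain ⟨hBO, k, hk, hBk⟩ := hL B hB
  rw [← hBA]
  exact ⟨(transpose_extendAlong_mul_self_eq_one_iff _ B).2 hBO, ⟨k, hk, hBk.extendAlong _⟩,
    hBA ▸ hAdet i⟩
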